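/- Assume in addition that (α² − β²) sin η₀ cos η₀ ≠ 0, and set k₁ = (α² − β²) sin η₀ cos η₀ / p² and N(s) = (γ''(s) + γ(s)) / k₁ (the unit normal of γ in S³). Then the second curvature scalar (torsion) of γ with respect to S³ is constant: for all s, ‖N'(s) + k₁ γ'(s)‖ = |α β| / p². (Here N'(s) is the covariant derivative DN/ds on S³, since ⟨N'(s), γ(s)⟩ = 0, and k₂ = ‖DN/ds + k₁ T‖ with T = γ'.) -/

import Mathlib

/-!
Identify `ℝ⁴` with `ℂ²`. With `U = α / p` and `V = β / p`, the curve is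
`γ(s) = (sin η₀ · e^{iUs}, cos η₀ · e^{iVs})`, and differentiation only multiplies the two
complex amplitudes by `iU` and `iV`. So every vector field in the Frenet computation is again a
curve of this shape, and the computation reduces to algebra on amplitudes. The choice of `p`
makes `γ` unit speed, `U² sin² η₀ + V² cos² η₀ = 1`, and `k₁ = (U² - V²) sin η₀ cos η₀`; with
these, `N = (-cos η₀ · e^{iUs}, sin η₀ · e^{iVs})` and `N' + k₁ γ'` has amplitudes
`(-iUV² cos η₀, iVU² sin η₀)`, whose norm is `|UV|`.
-/

open Real
open Complex (I)

noncomputable def complexPairToR4 : ℂ × ℂ →L[ℝ] EuclideanSpace ℝ (Fin 4) :=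
  (EuclideanSpace.equiv (Fin 4) ℝ).symm.toContinuousLinearMap ∘L
    ContinuousLinearMap.pi ![Complex.reCLM ∘L ContinuousLinearMap.fst ℝ ℂ ℂ,
      Complex.imCLM ∘L ContinuousLinearMap.fst ℝ ℂ ℂ, Complex.reCLM ∘L ContinuousLinearMap.snd ℝ ℂ ℂ,
      Complex.imCLM ∘L ContinuousLinearMap.snd ℝ ℂ ℂ]

theorem complexPairToR4_apply (z w : ℂ) :
    (complexPairToR4 (z, w)).ofLp = ![z.re, z.im, w.re, w.im] := by
  ext i
  fin_cases i <;> rfl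

theorem norm_complexPairToR4 (z w : ℂ) : ‖complexPairToR4 (z, w)‖ = √(‖z‖ ^ 2 + ‖w‖ ^ 2) := by
  rw [EuclideanSpace.norm_eq, Fin.sum_univ_four, complexPairToR4_apply, Complex.sq_norm,
    Complex.sq_norm, Complex.normSq_apply, Complex.normSq_apply]
  simp only [Matrix.cons_val, Real.norm_eq_abs, sq_abs]
  congr 1
  ring

theorem hasDerivAt_mul_exp_mul_I (z : ℂ) (U s : ℝ) :
    HasDerivAt (fun t : ℝ => z * Complex.exp (↑(U * t) * I))
      (U * I * z * Complex.exp (↑(U * s) * I)) s := by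
  have hphase : HasDerivAt (fun t : ℝ => (↑(U * t) : ℂ) * I) (U * I) s := by
    simpa using (((hasDerivAt_id s).const_mul U).ofReal_comp).mul_const I
  exact (hphase.cexp.const_mul z).congr_deriv (by ring)

noncomputable def torusCurve (U V : ℝ) (z w : ℂ) (s : ℝ) : EuclideanSpace ℝ (Fin 4) :=
  complexPairToR4 (z * Complex.exp (↑(U * s) * I), w * Complex.exp (↑(V * s) * I))

section torusCurve

variable (U V : ℝ) (z w : ℂ)

theorem torusCurve_ofLp (a b s : ℝ) :
    (torusCurve U V a b s).ofLp =
      ![a * cos (U * s), a * sin (U * s), b * cos (V * s), b * sin (V * s)] := by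
  simp only [torusCurve, complexPairToR4_apply, Complex.re_ofReal_mul, Complex.im_ofReal_mul,
    Complex.exp_ofReal_mul_I_re, Complex.exp_ofReal_mul_I_im]

theorem hasDerivAt_torusCurve (s : ℝ) :
    HasDerivAt (torusCurve U V z w) (torusCurve U V (U * I * z) (V * I * w) s) s :=
  complexPairToR4.hasFDerivAt.comp_hasDerivAt s
    ((hasDerivAt_mul_exp_mul_I z U s).prodMk (hasDerivAt_mul_exp_mul_I w V s))

theorem deriv_torusCurve :
    deriv (torusCurve U V z w) = torusCurve U V (U * I * z) (V * I * w) :=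
  funext fun s => (hasDerivAt_torusCurve U V z w s).deriv

theorem deriv_deriv_torusCurve :
    deriv (deriv (torusCurve U V z w)) = torusCurve U V (-U ^ 2 * z) (-V ^ 2 * w) := by
  rw [deriv_torusCurve, deriv_torusCurve]
  have hI (c : ℝ) (x : ℂ) : c * I * (c * I * x) = -c ^ 2 * x := by
    linear_combination (c : ℂ) ^ 2 * x * Complex.I_sq
  simp only [hI]

theorem torusCurve_add (z' w' : ℂ) (s : ℝ) :
    torusCurve U V z w s + torusCurve U V z' w' s = torusCurve U V (z + z') (w + w') s := by
  simp only [torusCurve, ← map_add, Prod.mk_add_mk, add_mul]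

theorem smul_torusCurve (k : ℝ) (s : ℝ) :
    k • torusCurve U V z w s = torusCurve U V (k * z) (k * w) s := by
  simp only [torusCurve, ← map_smul, Prod.smul_mk, Complex.real_smul, mul_assoc]

theorem norm_torusCurve (s : ℝ) : ‖torusCurve U V z w s‖ = √(‖z‖ ^ 2 + ‖w‖ ^ 2) := by
  simp only [torusCurve, norm_complexPairToR4, norm_mul, Complex.norm_exp_ofReal_mul_I, mul_one]

end torusCurve

section unitSpeed

variable {U V a b : ℝ}

theorem torusCurve_normal (hab : a ^ 2 + b ^ 2 = 1) (hspeed : U ^ 2 * a ^ 2 + V ^ 2 * b ^ 2 = 1)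
    (hk : (U ^ 2 - V ^ 2) * a * b ≠ 0) (s : ℝ) :
    ((U ^ 2 - V ^ 2) * a * b)⁻¹ • (deriv (deriv (torusCurve U V a b)) s + torusCurve U V a b s) =
      torusCurve U V (-b) a s := by
  have h₁ : ((U ^ 2 - V ^ 2) * a * b)⁻¹ * (-U ^ 2 * a + a) = -b := by
    rw [inv_mul_eq_iff_eq_mul₀ hk]
    linear_combination (-a) * hspeed + U ^ 2 * a * hab
  have h₂ : ((U ^ 2 - V ^ 2) * a * b)⁻¹ * (-V ^ 2 * b + b) = a := by
    rw [inv_mul_eq_iff_eq_mul₀ hk]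
    linear_combination (-b) * hspeed + V ^ 2 * b * hab
  rw [deriv_deriv_torusCurve, torusCurve_add, smul_torusCurve]
  congr 1
  · exact_mod_cast h₁
  · exact_mod_cast h₂

theorem torusCurve_torsion (hab : a ^ 2 + b ^ 2 = 1)
    (hspeed : U ^ 2 * a ^ 2 + V ^ 2 * b ^ 2 = 1) (s : ℝ) :
    ‖deriv (torusCurve U V (-b) a) s + ((U ^ 2 - V ^ 2) * a * b) • deriv (torusCurve U V a b) s‖ =
      |U * V| := by
  set k := (U ^ 2 - V ^ 2) * a * b
  have h₁ : -b + k * a = -(V ^ 2 * b) := by linear_combination b * hspeed - V ^ 2 * b * hab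
  have h₂ : a + k * b = U ^ 2 * a := by linear_combination U ^ 2 * a * hab - a * hspeed
  have e₁ : (U : ℂ) * I * -↑b + ↑k * (↑U * I * ↑a) = ↑(U * (-b + k * a)) * I := by
    push_cast; ring
  have e₂ : (V : ℂ) * I * ↑a + ↑k * (↑V * I * ↑b) = ↑(V * (a + k * b)) * I := by
    push_cast; ring
  rw [deriv_torusCurve, deriv_torusCurve, smul_torusCurve, torusCurve_add, norm_torusCurve, e₁, e₂,
    h₁, h₂]
  simp only [Complex.norm_mul, Complex.norm_I, Complex.norm_real, Real.norm_eq_abs, mul_one, sq_abs]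
  rw [show (U * -(V ^ 2 * b)) ^ 2 + (V * (U ^ 2 * a)) ^ 2 = (U * V) ^ 2 by
    linear_combination (U * V) ^ 2 * hspeed, Real.sqrt_sq_eq_abs]

end unitSpeed

theorem hopf_curve_constant_torsion_general
    (η₀ α β : ℝ)
    (p : ℝ) (hp : p = Real.sqrt (α ^ 2 * Real.sin η₀ ^ 2 + β ^ 2 * Real.cos η₀ ^ 2))
    (γ : ℝ → EuclideanSpace ℝ (Fin 4))
    (hγ : ∀ s, γ s = ![Real.sin η₀ * Real.cos (α * s / p), Real.sin η₀ * Real.sin (α * s / p),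
        Real.cos η₀ * Real.cos (β * s / p), Real.cos η₀ * Real.sin (β * s / p)])
    (hne : (α ^ 2 - β ^ 2) * Real.sin η₀ * Real.cos η₀ ≠ 0)
    (k₁ : ℝ) (hk₁ : k₁ = (α ^ 2 - β ^ 2) * Real.sin η₀ * Real.cos η₀ / p ^ 2)
    (N : ℝ → EuclideanSpace ℝ (Fin 4))
    (hN : ∀ s, N s = k₁⁻¹ • (deriv (deriv γ) s + γ s)) :
    ∀ s, ‖deriv N s + k₁ • deriv γ s‖ = |α * β| / p ^ 2 := by
  have hp2 : p ^ 2 = α ^ 2 * sin η₀ ^ 2 + β ^ 2 * cos η₀ ^ 2 := hp ▸ Real.sq_sqrt (by positivity)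
  have hp0 : p ≠ 0 := by
    rintro rfl
    have hα : α * sin η₀ = 0 := by nlinarith [sq_nonneg (α * sin η₀), sq_nonneg (β * cos η₀)]
    have hβ : β * cos η₀ = 0 := by nlinarith [sq_nonneg (α * sin η₀), sq_nonneg (β * cos η₀)]
    exact hne (by linear_combination (α * cos η₀) * hα - (β * sin η₀) * hβ)
  have hspeed : (α / p) ^ 2 * sin η₀ ^ 2 + (β / p) ^ 2 * cos η₀ ^ 2 = 1 := by
    field_simp
    exact hp2.symm
  obtain rfl : k₁ = ((α / p) ^ 2 - (β / p) ^ 2) * sin η₀ * cos η₀ := by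
    rw [hk₁]
    ring
  have hk₁0 : ((α / p) ^ 2 - (β / p) ^ 2) * sin η₀ * cos η₀ ≠ 0 := by
    rw [hk₁]
    exact div_ne_zero hne (pow_ne_zero 2 hp0)
  have hcurve : γ = torusCurve (α / p) (β / p) (sin η₀) (cos η₀) := by
    funext s
    apply WithLp.ofLp_injective
    rw [hγ, torusCurve_ofLp]
    simp only [div_mul_eq_mul_div]
  have hnormal : N = torusCurve (α / p) (β / p) (-cos η₀) (sin η₀) := by
    funext s
    rw [hN, hcurve, torusCurve_normal (sin_sq_add_cos_sq η₀) hspeed hk₁0]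
  intro s
  rw [hnormal, hcurve, torusCurve_torsion (sin_sq_add_cos_sq η₀) hspeed,
    show α / p * (β / p) = α * β / p ^ 2 by ring, abs_div, abs_sq]

/-- For the curve `γ` on the Clifford torus in `S³` (in Hopf coordinates, with
`p = √(α² sin²η₀ + β² cos²η₀)`), if the geodesic curvature
`k₁ = (α² − β²) sin η₀ cos η₀ / p²` is nonzero and `N = (γ'' + γ)/k₁` is the unit normal
of `γ` in `S³`, then the torsion of `γ` with respect to `S³` is constant:
`‖N' + k₁ γ'‖ = |αβ| / p²`. -/
theorem hopf_curve_constant_torsion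
    (η₀ α β : ℝ) (hη₀ : η₀ ∈ Set.Ioo 0 (Real.pi / 2)) (hαβ : ¬(α = 0 ∧ β = 0))
    (p : ℝ) (hp : p = Real.sqrt (α ^ 2 * Real.sin η₀ ^ 2 + β ^ 2 * Real.cos η₀ ^ 2))
    (γ : ℝ → EuclideanSpace ℝ (Fin 4))
    (hγ : ∀ s, γ s = ![Real.sin η₀ * Real.cos (α * s / p), Real.sin η₀ * Real.sin (α * s / p),
        Real.cos η₀ * Real.cos (β * s / p), Real.cos η₀ * Real.sin (β * s / p)])
    (hne : (α ^ 2 - β ^ 2) * Real.sin η₀ * Real.cos η₀ ≠ 0)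
    (k₁ : ℝ) (hk₁ : k₁ = (α ^ 2 - β ^ 2) * Real.sin η₀ * Real.cos η₀ / p ^ 2)
    (N : ℝ → EuclideanSpace ℝ (Fin 4))
    (hN : ∀ s, N s = k₁⁻¹ • (deriv (deriv γ) s + γ s)) :
    ∀ s, ‖deriv N s + k₁ • deriv γ s‖ = |α * β| / p ^ 2 :=
  hopf_curve_constant_torsion_general η₀ α β p hp γ hγ hne k₁ hk₁ N hN
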